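/- Let w ∈ ℂ with w ≠ 0 and suppose h_n^{(1)}(w) ≠ 0 and z_n^{(1)}(w) ≠ 0 for all integers n ≥ 1. Let s > 0. Then there exists a constant C > 0, depending only on w and s, such that for every integer N ≥ 1 and all families of complex numbers (a_n^m) and (b_n^m), indexed by integers n ≥ 1 and −n ≤ m ≤ n, one has ∑_{n=N+1}^{∞} ∑_{m=−n}^{n} [ (n(n+1))^{1/2} · |w·h_n^{(1)}(w)/z_n^{(1)}(w)|² · |a_n^m|² + (n(n+1))^{−1/2} · |z_n^{(1)}(w)/(w·h_n^{(1)}(w))|² · |b_n^m|² ] ≤ (C/N^s) · ∑_{n=N+1}^{∞} ∑_{m=−n}^{n} [ (n(n+1))^{s−1/2} · |a_n^m|² + (n(n+1))^{s+1/2} · |b_n^m|² ], where both sides are sums of nonnegative extended reals. -/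

import Mathlib

open Complex NNReal ENNReal

/-- Spherical Hankel function of the first kind (Rayleigh closed form). -/
noncomputable def sphHankel (n : ℕ) (z : ℂ) : ℂ :=
  (-Complex.I) ^ (n + 1) * (Complex.exp (Complex.I * z) / z) *
    ∑ k ∈ Finset.range (n + 1),
      (Complex.I ^ k / ((Nat.factorial k : ℂ) * (2 * z) ^ k)) *
        ((Nat.factorial (n + k) : ℂ) / (Nat.factorial (n - k) : ℂ))

/-- `z_n^{(1)}(z) = h_n^{(1)}(z) + z * h_n^{(1)'}(z)`. -/
noncomputable def zfun (n : ℕ) (z : ℂ) : ℂ :=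
  sphHankel n z + z * deriv (sphHankel n) z

/-- `n(n+1)` as a nonnegative extended real. -/
noncomputable def lam (n : ℕ) : ℝ≥0∞ := ((n * (n + 1) : ℕ) : ℝ≥0∞)

/-!
Reindexing the Rayleigh sum from its top term writes `h_n(w) = P_n T_n` and
`z_n(w) = P_n ((iw - n) T_n + V_n)` (`P_n = hankelPrefactor w n`), with
`T_n = ∑_{j ≤ n} ρ_{n,j} (-iw)^j / j!` and `V_n = ∑_{j ≤ n} j ρ_{n,j} (-iw)^j / j!`, where
`ρ_{n,j} = descRatio n j = 2^j n(n-1)⋯(n-j+1) / (2n)(2n-1)⋯(2n-j+1)` lies in `[0, 1]` and tends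
to `1`. By Tannery's theorem `T_n → e^{-iw} ≠ 0` and `V_n` converges,
so `z_n(w) / h_n(w) = -n + O(1)` and `|w h_n(w) / z_n(w)|² n(n+1) → |w|²`. These quantities are
positive for `n ≥ 1`, hence lie between two positive constants, and the estimate then holds term
by term because `N ≤ n(n+1)` for `n > N`.
-/

open Finset Filter Topology Asymptotics Nat

noncomputable def hankelCoeff (n k : ℕ) : ℂ :=
  I ^ k * (n + k)! / (k ! * 2 ^ k * (n - k)!)

lemma sphHankel_eq_sum (n : ℕ) (z : ℂ) :
    sphHankel n z = (-I) ^ (n + 1) * exp (I * z) *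
      ∑ k ∈ range (n + 1), hankelCoeff n k * (z ^ (k + 1))⁻¹ := by
  rw [sphHankel, mul_sum, mul_sum]
  refine sum_congr rfl fun k _ => ?_
  simp only [hankelCoeff, div_eq_mul_inv, mul_pow, mul_inv, pow_succ]
  ring

lemma hasDerivAt_sphHankel (n : ℕ) {z : ℂ} (hz : z ≠ 0) :
    HasDerivAt (sphHankel n) ((-I) ^ (n + 1) * exp (I * z) * ∑ k ∈ range (n + 1),
      hankelCoeff n k * (I * (z ^ (k + 1))⁻¹ - (k + 1) * (z ^ (k + 2))⁻¹)) z := by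
  have hterm (k : ℕ) : HasDerivAt (fun y : ℂ => exp (I * y) * (y ^ (k + 1))⁻¹)
      (exp (I * z) * (I * (z ^ (k + 1))⁻¹ - (k + 1) * (z ^ (k + 2))⁻¹)) z := by
    have hexp := ((hasDerivAt_id' z).const_mul I).cexp
    have hinv := (hasDerivAt_pow (k + 1) z).fun_inv (pow_ne_zero _ hz)
    refine (hexp.mul hinv).congr_deriv ?_
    field_simp
    push_cast
    ring
  have hsum := (HasDerivAt.fun_sum fun k (_ : k ∈ range (n + 1)) =>
    (hterm k).const_mul (hankelCoeff n k)).const_mul ((-I) ^ (n + 1))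
  have hfun : sphHankel n = fun y => (-I) ^ (n + 1) *
      ∑ k ∈ range (n + 1), hankelCoeff n k * (exp (I * y) * (y ^ (k + 1))⁻¹) := by
    funext y
    simp only [sphHankel_eq_sum, mul_assoc, mul_sum]
    exact sum_congr rfl fun k _ => by ring
  rw [hfun]
  refine hsum.congr_deriv ?_
  simp only [mul_assoc, mul_sum]
  exact sum_congr rfl fun k _ => by ring

lemma zfun_eq_sum (n : ℕ) {z : ℂ} (hz : z ≠ 0) :
    zfun n z = (-I) ^ (n + 1) * exp (I * z) *
      ∑ k ∈ range (n + 1), hankelCoeff n k * (z ^ (k + 1))⁻¹ * (I * z - k) := by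
  rw [zfun, (hasDerivAt_sphHankel n hz).deriv, sphHankel_eq_sum, mul_left_comm z, ← mul_add,
    mul_sum, ← sum_add_distrib]
  congr 1
  refine sum_congr rfl fun k _ => ?_
  field_simp
  ring

noncomputable def descRatio (n j : ℕ) : ℝ :=
  2 ^ j * n.descFactorial j / (2 * n).descFactorial j

lemma two_pow_mul_descFactorial_le (n j : ℕ) :
    2 ^ j * n.descFactorial j ≤ (2 * n).descFactorial j := by
  induction j with
  | zero => simp
  | succ j ih =>
    rw [descFactorial_succ, descFactorial_succ, pow_succ]
    calc 2 ^ j * 2 * ((n - j) * n.descFactorial j)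
        = 2 * (n - j) * (2 ^ j * n.descFactorial j) := by ring
      _ ≤ (2 * n - j) * (2 * n).descFactorial j := Nat.mul_le_mul (by omega) ih

lemma descRatio_nonneg (n j : ℕ) : 0 ≤ descRatio n j := by
  unfold descRatio
  positivity

lemma descRatio_le_one (n j : ℕ) : descRatio n j ≤ 1 :=
  div_le_one_of_le₀ (by exact_mod_cast two_pow_mul_descFactorial_le n j) (Nat.cast_nonneg _)

lemma descRatio_eq_zero_of_lt {n j : ℕ} (h : n < j) : descRatio n j = 0 := by
  simp [descRatio, descFactorial_eq_zero_iff_lt.mpr h]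

lemma tendsto_descRatio (j : ℕ) : Tendsto (descRatio · j) atTop (𝓝 1) := by
  have htwo : Tendsto (fun n : ℕ => 2 * n) atTop atTop :=
    tendsto_atTop_mono (fun n => show n ≤ 2 * n by omega) tendsto_id
  have hequiv :
      (descRatio · j) ~[atTop] fun n : ℕ => 2 ^ j * (n : ℝ) ^ j / ((2 * n : ℕ) : ℝ) ^ j :=
    ((IsEquivalent.refl (u := fun _ : ℕ => (2 : ℝ) ^ j)).mul (isEquivalent_descFactorial j)).div
      ((isEquivalent_descFactorial j).comp_tendsto htwo)
  refine hequiv.symm.tendsto_nhds (tendsto_const_nhds.congr' ?_)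
  filter_upwards [eventually_ne_atTop 0] with n hn
  push_cast
  field_simp
  ring

lemma tendsto_sum_descRatio_mul {c : ℕ → ℂ} (hc : Summable fun j => ‖c j‖) :
    Tendsto (fun n => ∑ j ∈ range (n + 1), (descRatio n j : ℂ) * c j) atTop
      (𝓝 (∑' j, c j)) := by
  have hfin (n : ℕ) :
      ∑' j, (descRatio n j : ℂ) * c j = ∑ j ∈ range (n + 1), (descRatio n j : ℂ) * c j :=
    tsum_eq_sum fun j hj => by
      rw [descRatio_eq_zero_of_lt (by simpa [Nat.lt_succ_iff] using hj), Complex.ofReal_zero,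
        zero_mul]
  refine (tendsto_tsum_of_dominated_convergence hc (fun j => ?_)
    (.of_forall fun n j => ?_)).congr hfin
  · simpa using ((Complex.continuous_ofReal.tendsto 1).comp (tendsto_descRatio j)).mul_const (c j)
  · rw [norm_mul, norm_real, Real.norm_of_nonneg (descRatio_nonneg n j)]
    exact mul_le_of_le_one_left (norm_nonneg _) (descRatio_le_one n j)

lemma hankelCoeff_sub {n j : ℕ} (hj : j ≤ n) :
    hankelCoeff n (n - j) = hankelCoeff n n * ((-I) ^ j / j ! * descRatio n j) := by
  obtain ⟨d, rfl⟩ := Nat.exists_eq_add_of_le' hj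
  have hfac : ((d + j)! : ℂ) = d ! * (d + j).descFactorial j := by
    have h := factorial_mul_descFactorial hj
    rw [Nat.add_sub_cancel] at h
    exact_mod_cast h.symm
  have hfac₂ : ((2 * (d + j))! : ℂ) = (d + j + d)! * (2 * (d + j)).descFactorial j := by
    have h := factorial_mul_descFactorial (show j ≤ 2 * (d + j) by omega)
    rw [show 2 * (d + j) - j = d + j + d by omega] at h
    exact_mod_cast h.symm
  have hdesc : ((2 * (d + j)).descFactorial j : ℂ) ≠ 0 :=
    Nat.cast_ne_zero.mpr (descFactorial_eq_zero_iff_lt.not.mpr (by omega))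
  have hdesc' : ((d + j).descFactorial j : ℂ) ≠ 0 :=
    Nat.cast_ne_zero.mpr (descFactorial_eq_zero_iff_lt.not.mpr (by omega))
  have hI : I ^ (d + j) * (-I) ^ j = I ^ d := by
    rw [pow_add, mul_assoc, ← mul_pow, mul_neg, I_mul_I, neg_neg, one_pow, mul_one]
  simp only [hankelCoeff, descRatio, Nat.add_sub_cancel, Nat.add_sub_cancel_left, Nat.sub_self,
    factorial_zero, show d + j + (d + j) = 2 * (d + j) by ring, hfac, hfac₂]
  push_cast
  field_simp
  rw [← hI]
  ring

noncomputable def hankelTerm (w : ℂ) (n j : ℕ) : ℂ :=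
  descRatio n j * ((-I * w) ^ j / j !)

lemma sum_hankelCoeff_mul_inv_pow (n : ℕ) {w : ℂ} (hw : w ≠ 0) (f : ℕ → ℂ) :
    ∑ k ∈ range (n + 1), hankelCoeff n k * (w ^ (k + 1))⁻¹ * f k =
      hankelCoeff n n * (w ^ (n + 1))⁻¹ *
        ∑ j ∈ range (n + 1), hankelTerm w n j * f (n - j) := by
  rw [← sum_range_reflect (fun k => hankelCoeff n k * (w ^ (k + 1))⁻¹ * f k), mul_sum]
  refine sum_congr rfl fun j hj => ?_
  have hjn : j ≤ n := Nat.lt_succ_iff.mp (mem_range.mp hj)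
  obtain ⟨d, rfl⟩ := Nat.exists_eq_add_of_le' hjn
  rw [Nat.add_sub_cancel, hankelCoeff_sub hjn, Nat.add_sub_cancel, hankelTerm]
  field_simp
  ring

noncomputable def hankelPrefactor (w : ℂ) (n : ℕ) : ℂ :=
  (-I) ^ (n + 1) * exp (I * w) * (hankelCoeff n n * (w ^ (n + 1))⁻¹)

lemma hankelPrefactor_ne_zero (n : ℕ) {w : ℂ} (hw : w ≠ 0) : hankelPrefactor w n ≠ 0 := by
  have hI : (-I : ℂ) ≠ 0 := neg_ne_zero.mpr I_ne_zero
  simp [hankelPrefactor, hankelCoeff, hw, hI, I_ne_zero, factorial_ne_zero]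

lemma sphHankel_eq_hankelPrefactor_mul (n : ℕ) {w : ℂ} (hw : w ≠ 0) :
    sphHankel n w = hankelPrefactor w n * ∑ j ∈ range (n + 1), hankelTerm w n j := by
  have h := sum_hankelCoeff_mul_inv_pow n hw fun _ => 1
  simp only [mul_one] at h
  rw [sphHankel_eq_sum, h, hankelPrefactor]
  ring

lemma zfun_eq_hankelPrefactor_mul (n : ℕ) {w : ℂ} (hw : w ≠ 0) :
    zfun n w = hankelPrefactor w n *
      ∑ j ∈ range (n + 1), hankelTerm w n j * (I * w - n + j) := by
  rw [zfun_eq_sum n hw, sum_hankelCoeff_mul_inv_pow n hw fun k => I * w - k, hankelPrefactor,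
    ← mul_assoc]
  congr 1
  refine sum_congr rfl fun j hj => ?_
  rw [Nat.cast_sub (Nat.lt_succ_iff.mp (mem_range.mp hj))]
  ring

lemma tendsto_sum_hankelTerm (w : ℂ) :
    Tendsto (fun n => ∑ j ∈ range (n + 1), hankelTerm w n j) atTop (𝓝 (exp (-I * w))) := by
  rw [exp_eq_exp_ℂ, ← (NormedSpace.expSeries_div_hasSum_exp (-I * w)).tsum_eq]
  exact tendsto_sum_descRatio_mul (NormedSpace.norm_expSeries_div_summable _)

lemma exists_tendsto_sum_hankelTerm_mul_natCast (w : ℂ) : ∃ v : ℂ,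
    Tendsto (fun n => ∑ j ∈ range (n + 1), hankelTerm w n j * j) atTop (𝓝 v) := by
  have hc : Summable fun j : ℕ => ‖(-I * w) ^ j / j ! * j‖ := by
    refine (Real.summable_pow_div_factorial (2 * ‖w‖)).of_nonneg_of_le (fun _ => norm_nonneg _)
      fun j => ?_
    have hj : (j : ℝ) ≤ 2 ^ j := by exact_mod_cast (Nat.lt_two_pow_self).le
    rw [norm_mul, norm_div, norm_pow, norm_mul, norm_neg, norm_I, one_mul, norm_natCast,
      norm_natCast, mul_pow, mul_comm (2 ^ j : ℝ), mul_div_right_comm]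
    gcongr
  exact ⟨_, (tendsto_sum_descRatio_mul hc).congr fun n => sum_congr rfl fun j _ => by
    rw [hankelTerm, mul_assoc]⟩

lemma exists_tendsto_zfun_div_sphHankel_add_natCast {w : ℂ} (hw : w ≠ 0) : ∃ L : ℂ,
    Tendsto (fun n => zfun n w / sphHankel n w + n) atTop (𝓝 L) := by
  obtain ⟨v, hV⟩ := exists_tendsto_sum_hankelTerm_mul_natCast w
  have hT := tendsto_sum_hankelTerm w
  refine ⟨I * w + v / exp (-I * w),
    (tendsto_const_nhds.add (hV.div hT (exp_ne_zero _))).congr' ?_⟩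
  filter_upwards [hT.eventually_ne (exp_ne_zero _)] with n hn
  have hsplit : ∑ j ∈ range (n + 1), hankelTerm w n j * (I * w - n + j) =
      (I * w - n) * ∑ j ∈ range (n + 1), hankelTerm w n j +
        ∑ j ∈ range (n + 1), hankelTerm w n j * j := by
    rw [mul_sum, ← sum_add_distrib]
    exact sum_congr rfl fun j _ => by ring
  rw [zfun_eq_hankelPrefactor_mul n hw, sphHankel_eq_hankelPrefactor_mul n hw,
    mul_div_mul_left _ _ (hankelPrefactor_ne_zero n hw), hsplit, Pi.div_apply]
  field_simp
  ring

lemma tendsto_norm_div_natCast_of_tendsto_add_natCast {r : ℕ → ℂ} {L : ℂ}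
    (h : Tendsto (fun n => r n + n) atTop (𝓝 L)) : Tendsto (fun n => ‖r n‖ / n) atTop (𝓝 1) := by
  have h0 : Tendsto (fun n : ℕ => (r n + n) * (n : ℂ)⁻¹) atTop (𝓝 0) := by
    simpa using h.mul (tendsto_inv_atTop_nhds_zero_nat (𝕜 := ℂ))
  have h1 : Tendsto (fun n : ℕ => ‖(r n + n) * (n : ℂ)⁻¹ - 1‖) atTop (𝓝 1) := by
    simpa using (h0.sub_const 1).norm
  refine h1.congr' ?_
  filter_upwards [eventually_ne_atTop 0] with n hn
  rw [add_mul, mul_inv_cancel₀ (Nat.cast_ne_zero.mpr hn), add_sub_cancel_right, norm_mul,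
    norm_inv, norm_natCast, div_eq_mul_inv]

lemma tendsto_norm_mul_sphHankel_div_zfun {w : ℂ} (hw : w ≠ 0) :
    Tendsto (fun n : ℕ => ‖w * sphHankel n w / zfun n w‖ ^ 2 * (n * (n + 1)))
      atTop (𝓝 (‖w‖ ^ 2)) := by
  obtain ⟨L, hL⟩ := exists_tendsto_zfun_div_sphHankel_add_natCast hw
  have hnum : Tendsto (fun n : ℕ => ‖w‖ ^ 2 * (1 + (n : ℝ)⁻¹)) atTop (𝓝 (‖w‖ ^ 2)) := by
    simpa using (tendsto_const_nhds (x := ‖w‖ ^ 2)).mul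
      ((tendsto_const_nhds (x := (1 : ℝ))).add tendsto_inv_atTop_nhds_zero_nat)
  have hlim := hnum.div ((tendsto_norm_div_natCast_of_tendsto_add_natCast hL).pow 2)
    (by norm_num)
  rw [one_pow, div_one] at hlim
  refine hlim.congr' ?_
  filter_upwards [eventually_ne_atTop 0] with n hn
  rw [Pi.div_apply, ← div_div_eq_mul_div w (zfun n w), norm_div w, div_pow, div_pow,
    div_div_eq_mul_div, div_mul_eq_mul_div]
  congr 1
  field_simp

lemma NNReal.exists_le_and_inv_le_of_tendsto {u : ℕ → ℝ≥0} {L : ℝ≥0} (hL : L ≠ 0)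
    (hu : Tendsto u atTop (𝓝 L)) (hu₀ : ∀ n, u n ≠ 0) :
    ∃ C : ℝ≥0, 0 < C ∧ ∀ n, u n ≤ C ∧ (u n)⁻¹ ≤ C := by
  obtain ⟨A, hA⟩ := hu.bddAbove_range
  obtain ⟨B, hB⟩ := (hu.inv₀ hL).bddAbove_range
  have hle (n : ℕ) : u n ≤ max A B ∧ (u n)⁻¹ ≤ max A B :=
    ⟨(hA ⟨n, rfl⟩).trans (le_max_left _ _), (hB ⟨n, rfl⟩).trans (le_max_right _ _)⟩
  exact ⟨max A B, (inv_pos.mpr (pos_iff_ne_zero.mpr (hu₀ 0))).trans_le (hle 0).2, hle⟩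

lemma exists_nnnorm_mul_sphHankel_div_zfun_sq_bounds {w : ℂ} (hw : w ≠ 0)
    (hh : ∀ n : ℕ, 1 ≤ n → sphHankel n w ≠ 0) (hz : ∀ n : ℕ, 1 ≤ n → zfun n w ≠ 0) :
    ∃ C : ℝ≥0, 0 < C ∧ ∀ n : ℕ, 1 ≤ n →
      (‖w * sphHankel n w / zfun n w‖₊ : ℝ≥0∞) ^ 2 * lam n ≤ C ∧
      (‖zfun n w / (w * sphHankel n w)‖₊ : ℝ≥0∞) ^ 2 ≤ C * lam n := by
  set q : ℕ → ℝ≥0 := fun n => ‖w * sphHankel n w / zfun n w‖₊ ^ 2 * ((n * (n + 1) : ℕ) : ℝ≥0)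
  -- `q 0 = 0`, so the bounds are taken for the shifted sequence.
  have hq : Tendsto (fun n => q (n + 1)) atTop (𝓝 (‖w‖₊ ^ 2)) := by
    rw [← NNReal.tendsto_coe]
    simpa [q, Function.comp_def] using
      (tendsto_norm_mul_sphHankel_div_zfun hw).comp (tendsto_add_atTop_nat 1)
  have hq₀ (n : ℕ) : q (n + 1) ≠ 0 := by
    simp [q, hw, hh (n + 1) (by omega), hz (n + 1) (by omega)]
  obtain ⟨C, hC, hCq⟩ := NNReal.exists_le_and_inv_le_of_tendsto (by simpa using hw) hq hq₀
  refine ⟨C, hC, fun n hn => ?_⟩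
  obtain ⟨m, rfl⟩ := Nat.exists_eq_add_of_le' hn
  obtain ⟨hup, hlow⟩ := hCq m
  have hlam : (((m + 1) * (m + 1 + 1) : ℕ) : ℝ≥0) ≠ 0 := by positivity
  have hinv : ‖zfun (m + 1) w / (w * sphHankel (m + 1) w)‖₊ ^ 2 =
      (q (m + 1))⁻¹ * ((m + 1) * (m + 1 + 1) : ℕ) := by
    rw [← inv_div, nnnorm_inv, mul_inv, mul_assoc, inv_mul_cancel₀ hlam, mul_one, inv_pow]
  rw [lam, ← ENNReal.coe_natCast, ← ENNReal.coe_pow, ← ENNReal.coe_pow, ← ENNReal.coe_mul,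
    ← ENNReal.coe_mul, ENNReal.coe_le_coe, ENNReal.coe_le_coe, hinv]
  exact ⟨hup, by gcongr⟩

lemma ENNReal.le_div_rpow_mul_rpow_add {x C u N : ℝ≥0∞} {r s : ℝ} (hs : 0 ≤ s) (hu₀ : u ≠ 0)
    (hu : u ≠ ⊤) (hN : N ≤ u) (hx : x ≤ C * u ^ r) : x ≤ C / N ^ s * u ^ (s + r) :=
  calc x ≤ C * u ^ r := hx
    _ = C / u ^ s * u ^ (s + r) := by
      rw [ENNReal.rpow_add _ _ hu₀ hu, ← mul_assoc, ENNReal.div_mul_cancel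
        (ENNReal.rpow_pos (pos_iff_ne_zero.mpr hu₀) hu).ne' (ENNReal.rpow_ne_top_of_nonneg hs hu)]
    _ ≤ C / N ^ s * u ^ (s + r) := by gcongr

lemma ENNReal.rpow_half_eq_rpow_neg_half_mul {u : ℝ≥0∞} (hu₀ : u ≠ 0) (hu : u ≠ ⊤) :
    u ^ ((1 : ℝ) / 2) = u ^ (-(1 : ℝ) / 2) * u := by
  rw [show (1 : ℝ) / 2 = -(1 : ℝ) / 2 + 1 by norm_num, ENNReal.rpow_add _ _ hu₀ hu,
    ENNReal.rpow_one]

lemma ENNReal.rpow_half_mul_add_rpow_neg_half_mul_le {u N C x y A B : ℝ≥0∞} {s : ℝ}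
    (hs : 0 ≤ s) (hu₀ : u ≠ 0) (hu : u ≠ ⊤) (hN : N ≤ u) (hx : x * u ≤ C) (hy : y ≤ C * u) :
    u ^ ((1 : ℝ) / 2) * x * A + u ^ (-(1 : ℝ) / 2) * y * B ≤
      C / N ^ s * (u ^ (s - 1 / 2) * A + u ^ (s + 1 / 2) * B) := by
  have hx' : u ^ ((1 : ℝ) / 2) * x ≤ C * u ^ (-(1 : ℝ) / 2) :=
    calc u ^ ((1 : ℝ) / 2) * x = u ^ (-(1 : ℝ) / 2) * (x * u) := by
          rw [ENNReal.rpow_half_eq_rpow_neg_half_mul hu₀ hu]; ring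
      _ ≤ C * u ^ (-(1 : ℝ) / 2) := by rw [mul_comm C]; gcongr
  have hy' : u ^ (-(1 : ℝ) / 2) * y ≤ C * u ^ ((1 : ℝ) / 2) :=
    calc u ^ (-(1 : ℝ) / 2) * y ≤ u ^ (-(1 : ℝ) / 2) * (C * u) := by gcongr
      _ = C * u ^ ((1 : ℝ) / 2) := by rw [ENNReal.rpow_half_eq_rpow_neg_half_mul hu₀ hu]; ring
  rw [show s - 1 / 2 = s + -(1 : ℝ) / 2 by ring, mul_add, ← mul_assoc, ← mul_assoc]
  gcongr ?_ * _ + ?_ * _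
  · exact ENNReal.le_div_rpow_mul_rpow_add hs hu₀ hu hN hx'
  · exact ENNReal.le_div_rpow_mul_rpow_add hs hu₀ hu hN hy'

theorem dtn_truncation_error_coeff (w : ℂ) (hw : w ≠ 0)
    (hh : ∀ n : ℕ, 1 ≤ n → sphHankel n w ≠ 0)
    (hz : ∀ n : ℕ, 1 ≤ n → zfun n w ≠ 0)
    (s : ℝ) (hs : 0 < s) :
    ∃ C : ℝ≥0, 0 < C ∧ ∀ N : ℕ, 1 ≤ N → ∀ a b : ℕ → ℤ → ℂ,
      (∑' k : ℕ, ∑ m ∈ Finset.Icc (-((k + N + 1 : ℕ) : ℤ)) ((k + N + 1 : ℕ) : ℤ),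
        (lam (k + N + 1) ^ ((1 : ℝ) / 2) *
            (‖w * sphHankel (k + N + 1) w / zfun (k + N + 1) w‖₊ : ℝ≥0∞) ^ 2 *
            (‖a (k + N + 1) m‖₊ : ℝ≥0∞) ^ 2
          + lam (k + N + 1) ^ (-(1 : ℝ) / 2) *
            (‖zfun (k + N + 1) w / (w * sphHankel (k + N + 1) w)‖₊ : ℝ≥0∞) ^ 2 *
            (‖b (k + N + 1) m‖₊ : ℝ≥0∞) ^ 2))
      ≤ (C : ℝ≥0∞) / (N : ℝ≥0∞) ^ s *
        ∑' k : ℕ, ∑ m ∈ Finset.Icc (-((k + N + 1 : ℕ) : ℤ)) ((k + N + 1 : ℕ) : ℤ),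
          (lam (k + N + 1) ^ (s - 1 / 2) * (‖a (k + N + 1) m‖₊ : ℝ≥0∞) ^ 2
            + lam (k + N + 1) ^ (s + 1 / 2) * (‖b (k + N + 1) m‖₊ : ℝ≥0∞) ^ 2) := by
  obtain ⟨C, hC, hbound⟩ := exists_nnnorm_mul_sphHankel_div_zfun_sq_bounds hw hh hz
  refine ⟨C, hC, fun N _ a b => ?_⟩
  rw [← ENNReal.tsum_mul_left]
  refine ENNReal.tsum_le_tsum fun k => ?_
  rw [mul_sum]
  refine sum_le_sum fun m _ => ?_
  obtain ⟨hx, hy⟩ := hbound (k + N + 1) (by omega)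
  refine ENNReal.rpow_half_mul_add_rpow_neg_half_mul_le hs.le (by simp [lam])
    (ENNReal.natCast_ne_top _) ?_ hx hy
  rw [lam]
  exact_mod_cast (show N ≤ (k + N + 1) * (k + N + 1 + 1) by nlinarith)
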